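/- arXiv:math/9504210 — 4 statements merged into one kernel-verified Lean document; each statement's English description precedes it below -/
import Mathlib

section
/- If f and g are polynomial maps on ℂ that commute under composition (f ∘ g = g ∘ f), then g maps the filled Julia set of f into itself, i.e. g(K_f) ⊆ K_f, where K_f is the set of points z whose forward orbit {f^[i](z)} is bounded. -/
/-! A commuting map `g` carries the `f`-orbit of `z` onto the `f`-orbit of `g z`. A bounded orbit in
`ℂ` has compact closure, so its image under the continuous map `g` is again bounded. -/

open Bornology Function Set

variable {X Y : Type*}

theorem Bornology.IsBounded.image_of_continuous [PseudoMetricSpace X] [ProperSpace X]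
    [PseudoMetricSpace Y] {g : X → Y} (hg : Continuous g) {s : Set X} (hs : IsBounded s) :
    IsBounded (g '' s) :=
  (hs.isCompact_closure.image hg).isBounded.subset (image_mono subset_closure)

theorem Function.Semiconj.image_range_iterate {f : X → X} {f' : Y → Y} {g : X → Y}
    (h : Semiconj g f f') (z : X) :
    g '' range (fun i => f^[i] z) = range (fun i => f'^[i] (g z)) := by
  rw [← range_comp]
  exact congrArg range (funext fun i => (h.iterate_right i).eq z)

theorem Function.Semiconj.isBounded_range_iterate [PseudoMetricSpace X] [ProperSpace X]
    [PseudoMetricSpace Y] {f : X → X} {f' : Y → Y} {g : X → Y} (h : Semiconj g f f')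
    (hg : Continuous g) {z : X} (hz : IsBounded (range fun i => f^[i] z)) :
    IsBounded (range fun i => f'^[i] (g z)) :=
  h.image_range_iterate z ▸ hz.image_of_continuous hg

theorem stmt_0 (f g : Polynomial ℂ)
    (hcomm : ∀ z : ℂ, f.eval (g.eval z) = g.eval (f.eval z)) :
    (fun z : ℂ => g.eval z) ''
        {z : ℂ | Bornology.IsBounded (Set.range (fun i => (fun w : ℂ => f.eval w)^[i] z))} ⊆
      {z : ℂ | Bornology.IsBounded (Set.range (fun i => (fun w : ℂ => f.eval w)^[i] z))} := by
  rintro _ ⟨z, hz, rfl⟩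
  exact Semiconj.isBounded_range_iterate (fun w => (hcomm w).symm) g.continuous hz
end

section
/- If f and g are polynomials of degree at least 2 that commute under composition, then they have the same filled Julia set: K_f = K_g, where the filled Julia set is the set of points with bounded forward orbit. -/
/-!
Outside a large disc a polynomial of degree at least two at least doubles the norm, so a bounded
orbit of `f` never leaves that disc and `K_f` is bounded. Since `f^[n] ∘ g = g ∘ f^[n]`, the
`f`-orbit of `g z` is the image of the `f`-orbit of `z` under the continuous map `g`, so `g` maps
`K_f` into itself. The `g`-orbit of a point of `K_f` therefore stays in the bounded set
`K_f`, giving `K_f ⊆ K_g`, and the reverse inclusion holds by symmetry.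
-/

open Polynomial Bornology Filter Set Function Metric

/-- For a polynomial map this is its filled Julia set. -/
def Function.boundedOrbitSet {α : Type*} [Bornology α] (f : α → α) : Set α :=
  {z | IsBounded (range fun n => f^[n] z)}

namespace Function

variable {α : Type*}

theorem mapsTo_boundedOrbitSet_of_commute [PseudoMetricSpace α] [ProperSpace α] {f g : α → α}
    (hg : Continuous g) (hfg : Function.Commute f g) :
    MapsTo g (boundedOrbitSet f) (boundedOrbitSet f) := by
  intro z hz
  have horbit : (range fun n => f^[n] (g z)) = g '' range fun n => f^[n] z := by
    simp only [← range_comp, comp_def, (hfg.iterate_left _).eq]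
  rw [boundedOrbitSet, mem_ofPred_eq, horbit]
  exact ((hz.isCompact_closure.image hg).isBounded).subset (image_mono subset_closure)

theorem boundedOrbitSet_subset_of_commute [PseudoMetricSpace α] [ProperSpace α] {f g : α → α}
    (hf : IsBounded (boundedOrbitSet f)) (hg : Continuous g) (hfg : Function.Commute f g) :
    boundedOrbitSet f ⊆ boundedOrbitSet g := by
  intro z hz
  refine hf.subset ?_
  rintro _ ⟨n, rfl⟩
  exact ((mapsTo_boundedOrbitSet_of_commute hg hfg).iterate n) hz

theorem boundedOrbitSet_subset_closedBall {E : Type*} [SeminormedAddCommGroup E] {f : E → E}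
    {R : ℝ} (hR : 0 < R) (hf : ∀ z, R ≤ ‖z‖ → 2 * ‖z‖ ≤ ‖f z‖) :
    boundedOrbitSet f ⊆ closedBall 0 R := by
  intro z hz
  rw [mem_closedBall_zero_iff]
  by_contra! hzR
  have hgrowth : ∀ n : ℕ, 2 ^ n * ‖z‖ ≤ ‖f^[n] z‖ := by
    intro n
    induction n with
    | zero => simp
    | succ n ih =>
      have hle : ‖z‖ ≤ 2 ^ n * ‖z‖ :=
        le_mul_of_one_le_left (norm_nonneg z) (one_le_pow₀ one_le_two)
      rw [iterate_succ_apply', pow_succ']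
      calc 2 * 2 ^ n * ‖z‖ ≤ 2 * ‖f^[n] z‖ := by rw [mul_assoc]; gcongr
        _ ≤ ‖f (f^[n] z)‖ := hf _ (by linarith)
  obtain ⟨C, hC⟩ := isBounded_iff_forall_norm_le.mp hz
  obtain ⟨n, hn⟩ := pow_unbounded_of_one_lt (C / ‖z‖) one_lt_two
  rw [div_lt_iff₀ (hR.trans hzR)] at hn
  linarith [hgrowth n, hC _ (mem_range_self n)]

end Function

namespace Polynomial

variable {𝕜 : Type*} [NormedField 𝕜]

theorem exists_two_mul_norm_le_norm_eval {p : 𝕜[X]} (hp : 2 ≤ p.natDegree) :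
    ∃ R > 0, ∀ z : 𝕜, R ≤ ‖z‖ → 2 * ‖z‖ ≤ ‖p.eval z‖ := by
  have hdivX : 0 < p.divX.degree := by
    rw [← natDegree_pos_iff_degree_pos, natDegree_divX_eq_natDegree_tsub_one]
    omega
  have htendsto : Tendsto (fun z : 𝕜 => ‖p.divX.eval z‖) (comap norm atTop) atTop :=
    p.divX.tendsto_norm_atTop hdivX tendsto_comap
  obtain ⟨a, ha⟩ := eventually_atTop.mp (eventually_comap.mp (htendsto.eventually_ge_atTop 3))
  refine ⟨max (max a 1) ‖p.coeff 0‖, by positivity, fun z hz => ?_⟩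
  have h3 : 3 ≤ ‖p.divX.eval z‖ :=
    ha ‖z‖ ((le_max_left _ _).trans ((le_max_left _ _).trans hz)) z rfl
  have hc : ‖p.coeff 0‖ ≤ ‖z‖ := (le_max_right _ _).trans hz
  have heval : p.eval z - p.coeff 0 = p.divX.eval z * z := by
    conv_lhs => rw [← divX_mul_X_add p]
    simp
  have htriangle := norm_sub_le (p.eval z) (p.coeff 0)
  rw [heval, norm_mul] at htriangle
  nlinarith [norm_nonneg z]

theorem isBounded_boundedOrbitSet_eval {p : 𝕜[X]} (hp : 2 ≤ p.natDegree) :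
    IsBounded (boundedOrbitSet fun z => p.eval z) :=
  let ⟨_, hR, hescape⟩ := exists_two_mul_norm_le_norm_eval hp
  isBounded_closedBall.subset (boundedOrbitSet_subset_closedBall hR hescape)

end Polynomial

theorem stmt_1 (f g : Polynomial ℂ)
    (hf : 2 ≤ f.natDegree) (hg : 2 ≤ g.natDegree)
    (hcomm : ∀ z : ℂ, f.eval (g.eval z) = g.eval (f.eval z)) :
    {z : ℂ | Bornology.IsBounded (Set.range (fun i => (fun w : ℂ => f.eval w)^[i] z))} =
      {z : ℂ | Bornology.IsBounded (Set.range (fun i => (fun w : ℂ => g.eval w)^[i] z))} :=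
  subset_antisymm
    (boundedOrbitSet_subset_of_commute (isBounded_boundedOrbitSet_eval hf) g.continuous hcomm)
    (boundedOrbitSet_subset_of_commute (isBounded_boundedOrbitSet_eval hg) f.continuous
      fun z => (hcomm z).symm)
end

section
/- If σ is a complex number with |σ| = 1 and f is a polynomial of degree n satisfying f(σz) = σⁿ f(z) for all z, then multiplication by σ maps the filled Julia set K_f of f onto itself: σ·K_f = K_f. -/
/-! Iterating `f (σ z) = σⁿ f z` gives `f^[i] (σ z) = σ^(nⁱ) f^[i] z`, so as `‖σ‖ = 1` the orbits
of `z` and `σ z` have the same moduli: one is bounded iff the other is. -/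

open Bornology Set

def filledJuliaSet {α : Type*} [Bornology α] (g : α → α) : Set α :=
  {z | IsBounded (range fun i => g^[i] z)}

theorem map_pow_mul_of_map_mul {M : Type*} [Monoid M] {g : M → M} {σ : M} {n : ℕ}
    (hg : ∀ z, g (σ * z) = σ ^ n * g z) (k : ℕ) (z : M) :
    g (σ ^ k * z) = σ ^ (k * n) * g z := by
  induction k with
  | zero => simp
  | succ k ih =>
    rw [pow_succ', mul_assoc, hg, ih, ← mul_assoc, ← pow_add, Nat.succ_mul, add_comm]

theorem iterate_map_mul_of_map_mul {M : Type*} [Monoid M] {g : M → M} {σ : M} {n : ℕ}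
    (hg : ∀ z, g (σ * z) = σ ^ n * g z) (i : ℕ) (z : M) :
    g^[i] (σ * z) = σ ^ n ^ i * g^[i] z := by
  induction i with
  | zero => simp
  | succ i ih =>
    rw [Function.iterate_succ_apply', Function.iterate_succ_apply', ih,
      map_pow_mul_of_map_mul hg, pow_succ, mul_comm (n ^ i)]

theorem isBounded_range_iff_of_norm_eq {ι E F : Type*} [SeminormedAddCommGroup E]
    [SeminormedAddCommGroup F] {u : ι → E} {v : ι → F} (h : ∀ i, ‖u i‖ = ‖v i‖) :
    IsBounded (range u) ↔ IsBounded (range v) := by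
  simp only [isBounded_iff_forall_norm_le, forall_mem_range, h]

section

variable {𝕜 : Type*} [NormedDivisionRing 𝕜] {g : 𝕜 → 𝕜} {σ : 𝕜} {n : ℕ}

theorem mul_mem_filledJuliaSet_iff (hσ : ‖σ‖ = 1) (hg : ∀ z, g (σ * z) = σ ^ n * g z) (z : 𝕜) :
    σ * z ∈ filledJuliaSet g ↔ z ∈ filledJuliaSet g :=
  isBounded_range_iff_of_norm_eq fun i => by
    rw [iterate_map_mul_of_map_mul hg, norm_mul, norm_pow, hσ, one_pow, one_mul]

theorem image_mul_filledJuliaSet (hσ : ‖σ‖ = 1) (hg : ∀ z, g (σ * z) = σ ^ n * g z) :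
    (σ * ·) '' filledJuliaSet g = filledJuliaSet g := by
  have hσ0 : σ ≠ 0 := norm_ne_zero_iff.mp (hσ ▸ one_ne_zero)
  conv_rhs => rw [← (mul_left_surjective₀ hσ0).image_preimage (filledJuliaSet g)]
  congr 1
  ext z
  exact (mul_mem_filledJuliaSet_iff hσ hg z).symm

end

theorem stmt_12_general (f : Polynomial ℂ) (n : ℕ)
    (σ : ℂ) (hσ : ‖σ‖ = 1)
    (hsym : ∀ z : ℂ, f.eval (σ * z) = σ ^ n * f.eval z) :
    (fun z => σ * z) ''
        {z : ℂ | Bornology.IsBounded (Set.range (fun i => (fun w : ℂ => f.eval w)^[i] z))} =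
      {z : ℂ | Bornology.IsBounded (Set.range (fun i => (fun w : ℂ => f.eval w)^[i] z))} :=
  image_mul_filledJuliaSet hσ hsym

theorem stmt_12 (f : Polynomial ℂ) (n : ℕ) (hn : f.natDegree = n) (hn2 : 2 ≤ n)
    (σ : ℂ) (hσ : ‖σ‖ = 1)
    (hsym : ∀ z : ℂ, f.eval (σ * z) = σ ^ n * f.eval z) :
    (fun z => σ * z) ''
        {z : ℂ | Bornology.IsBounded (Set.range (fun i => (fun w : ℂ => f.eval w)^[i] z))} =
      {z : ℂ | Bornology.IsBounded (Set.range (fun i => (fun w : ℂ => f.eval w)^[i] z))} :=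
  stmt_12_general f n σ hσ hsym
end

section
/- If n and m are integers ≥ 2 with n^ν = m^μ for positive integers ν, μ, then there exist a positive integer r ≥ 2 and positive integers s, S with n = r^s and m = r^S. -/
theorem one_lt_and_ne_zero_of_one_lt_pow {M : Type*} [Monoid M] [LinearOrder M] [MulLeftMono M]
    {x : M} {k : ℕ} (h : 1 < x ^ k) : 1 < x ∧ k ≠ 0 := by
  have hk : k ≠ 0 := by
    rintro rfl
    exact (lt_irrefl 1) (pow_zero x ▸ h)
  exact ⟨(one_lt_pow_iff hk).1 h, hk⟩

theorem stmt_17_general (n m ν μ : ℕ) (hn : 2 ≤ n) (hm : 2 ≤ m) (hν : 1 ≤ ν)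
    (h : n ^ ν = m ^ μ) :
    ∃ r s S : ℕ, 2 ≤ r ∧ 1 ≤ s ∧ 1 ≤ S ∧ n = r ^ s ∧ m = r ^ S := by
  obtain ⟨r, rfl, rfl⟩ := Nat.exists_eq_pow_of_pow_eq_pow (Or.inl (Nat.one_le_iff_ne_zero.1 hν)) h
  obtain ⟨hr, hs⟩ := one_lt_and_ne_zero_of_one_lt_pow (M := ℕ) hn
  obtain ⟨-, hS⟩ := one_lt_and_ne_zero_of_one_lt_pow (M := ℕ) hm
  exact ⟨r, _, _, hr, Nat.one_le_iff_ne_zero.2 hs, Nat.one_le_iff_ne_zero.2 hS, rfl, rfl⟩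

theorem stmt_17 (n m ν μ : ℕ) (hn : 2 ≤ n) (hm : 2 ≤ m) (hν : 1 ≤ ν) (hμ : 1 ≤ μ)
    (h : n ^ ν = m ^ μ) :
    ∃ r s S : ℕ, 2 ≤ r ∧ 1 ≤ s ∧ 1 ≤ S ∧ n = r ^ s ∧ m = r ^ S :=
  stmt_17_general n m ν μ hn hm hν h
end
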